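/- arXiv:2407.07570 — 3 statements merged into one kernel-verified Lean document; each statement's English description precedes it below -/
import Mathlib

section
/- In any Kleene algebra, the denesting law holds: (x + y)* = x*·(y·x*)*. -/
/-- In any Kleene algebra, the denesting law holds: `(x + y)* = x* · (y·x*)*`. -/
theorem stmt3 {K : Type*} [KleeneAlgebra K] (x y : K) :
    KStar.kstar (x + y) = KStar.kstar x * KStar.kstar (y * KStar.kstar x) := by
  apply le_antisymm
  · apply kstar_le_of_mul_le_right
    · exact le_mul_of_one_le_of_le one_le_kstar one_le_kstar
    · rw [add_mul]
      apply add_le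
      · calc x * (KStar.kstar x * KStar.kstar (y * KStar.kstar x))
            = (x * KStar.kstar x) * KStar.kstar (y * KStar.kstar x) := (mul_assoc _ _ _).symm
          _ ≤ KStar.kstar x * KStar.kstar (y * KStar.kstar x) :=
              mul_le_mul_left mul_kstar_le_kstar _
      · calc y * (KStar.kstar x * KStar.kstar (y * KStar.kstar x))
            = (y * KStar.kstar x) * KStar.kstar (y * KStar.kstar x) := (mul_assoc _ _ _).symm
          _ ≤ KStar.kstar (y * KStar.kstar x) := mul_kstar_le_kstar
          _ ≤ KStar.kstar x * KStar.kstar (y * KStar.kstar x) :=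
              le_mul_of_one_le_left' one_le_kstar
  · have hx : KStar.kstar x ≤ KStar.kstar (x + y) := kstar_mono le_self_add
    have hy : KStar.kstar (y * KStar.kstar x) ≤ KStar.kstar (x + y) := by
      have : y * KStar.kstar x ≤ KStar.kstar (x + y) * KStar.kstar (x + y) :=
        mul_le_mul' (le_add_self.trans le_kstar) hx
      rw [kstar_mul_kstar] at this
      calc KStar.kstar (y * KStar.kstar x) ≤ KStar.kstar (KStar.kstar (x + y)) :=
            kstar_mono this
        _ = KStar.kstar (x + y) := kstar_idem _
    calc KStar.kstar x * KStar.kstar (y * KStar.kstar x)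
        ≤ KStar.kstar (x + y) * KStar.kstar (x + y) := mul_le_mul' hx hy
      _ = KStar.kstar (x + y) := kstar_mul_kstar _
end

section
/- In a Kleene S-algebra (S a finite copo-semiring), the inequality 1 ⊙ s* ≤ (1 ⊙ s)* together with the other axioms implies the equality 1 ⊙ s* = (1 ⊙ s)*. -/
/-- A Kleene `S`-algebra: a Kleene algebra `X` with a right `S`-semimodule action
`act : X → S → X` satisfying `(x·y)⊙s = x·(y⊙s) = (x⊙s)·y`. -/
class KleeneSMod (S : Type*) (X : Type*) [Semiring S] [KleeneAlgebra X] where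
  act : X → S → X
  act_add_right : ∀ (x : X) (s t : S), act x (s + t) = act x s + act x t
  act_add_left : ∀ (x y : X) (s : S), act (x + y) s = act x s + act y s
  act_mul_right : ∀ (x : X) (s t : S), act x (s * t) = act (act x s) t
  act_one : ∀ x : X, act x 1 = x
  act_zero : ∀ x : X, act x 0 = 0
  zero_act : ∀ s : S, act (0 : X) s = 0
  mul_act : ∀ (x y : X) (s : S), act (x * y) s = x * act y s
  act_mul : ∀ (x y : X) (s : S), act (x * y) s = act x s * y

/-!
The partial sums of `s*` stabilise, so `s* = s · s* + 1` holds in `S`.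
Since `a ↦ 1 ⊙ a` is a semiring homomorphism into `X`, the element `1 ⊙ s*` solves
`a = (1 ⊙ s) · a + 1` in `X`, and the least-fixed-point property of the Kleene star gives
`(1 ⊙ s)* ≤ 1 ⊙ s*`.
-/

open Finset Computability

theorem eq_mul_add_one_of_geom_sum_eventually_eq {S : Type*} [Semiring S] {s t : S} {N : ℕ}
    (hN : ∀ m ≥ N, ∑ i ∈ range (m + 1), s ^ i = t) : t = s * t + 1 :=
  calc t = ∑ i ∈ range (N + 1 + 1), s ^ i := (hN (N + 1) (by omega)).symm
    _ = s * ∑ i ∈ range (N + 1), s ^ i + 1 := geom_sum_succ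
    _ = s * t + 1 := by rw [hN N le_rfl]

theorem kstar_le_of_eq_mul_add_one {α : Type*} [KleeneAlgebra α] {a b : α}
    (h : b = a * b + 1) : a∗ ≤ b :=
  kstar_le_of_mul_le_right (le_add_self.trans_eq h.symm) (le_self_add.trans_eq h.symm)

theorem KleeneSMod.act_one_mul_act_one {S X : Type*} [Semiring S] [KleeneAlgebra X]
    [KleeneSMod S X] (a b : S) : act (1 : X) a * act (1 : X) b = act (1 : X) (a * b) := by
  rw [act_mul_right, ← mul_act, mul_one]

theorem stmt10_general {S X : Type*} [CommSemiring S]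
    [KleeneAlgebra X] [KleeneSMod S X]
    (sstar : S → S)
    (hsstar : ∀ s : S, ∃ N : ℕ, ∀ m ≥ N,
      (∑ i ∈ Finset.range (m + 1), s ^ i) = sstar s)
    (hax : ∀ s : S,
      KleeneSMod.act (1 : X) (sstar s) ≤ KStar.kstar (KleeneSMod.act (1 : X) s)) :
    ∀ s : S,
      KleeneSMod.act (1 : X) (sstar s) = KStar.kstar (KleeneSMod.act (1 : X) s) := by
  intro s
  obtain ⟨N, hN⟩ := hsstar s
  have hfix : sstar s = s * sstar s + 1 := eq_mul_add_one_of_geom_sum_eventually_eq hN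
  refine le_antisymm (hax s) (kstar_le_of_eq_mul_add_one ?_)
  conv_lhs => rw [hfix, KleeneSMod.act_add_right, ← KleeneSMod.act_one_mul_act_one,
    KleeneSMod.act_one]

/-- In a Kleene `S`-algebra over a finite copo-semiring `S`, the axiom
`1 ⊙ s* ≤ (1 ⊙ s)*` together with the other axioms implies `1 ⊙ s* = (1 ⊙ s)*`. -/
theorem stmt10 {S X : Type*} [CommSemiring S] [Fintype S] [PartialOrder S]
    [KleeneAlgebra X] [KleeneSMod S X]
    (hadd_mono : ∀ a b c d : S, a ≤ b → c ≤ d → a + c ≤ b + d)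
    (hmul_mono : ∀ a b c d : S, a ≤ b → c ≤ d → a * c ≤ b * d)
    (hzero_le : ∀ s : S, (0 : S) ≤ s)
    (sstar : S → S)
    (hsstar : ∀ s : S, ∃ N : ℕ, ∀ m ≥ N,
      (∑ i ∈ Finset.range (m + 1), s ^ i) = sstar s)
    (hax : ∀ s : S,
      KleeneSMod.act (1 : X) (sstar s) ≤ KStar.kstar (KleeneSMod.act (1 : X) s)) :
    ∀ s : S,
      KleeneSMod.act (1 : X) (sstar s) = KStar.kstar (KleeneSMod.act (1 : X) s) :=
  stmt10_general sstar hsstar hax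
end

section
/- The rational guarded formal power series S^rat⟨⟨Σ*_Φ⟩⟩ over a finite copo-semiring S form a Kleene S-algebra with tests, where the tests are the series 1_K for K ⊆ At(Φ) (value 1 on atoms in K, 0 elsewhere), with complement 1_K^bar = 1_{At(Φ)\K}, star r*(w) = Σ_{n} r^n(w), and scalar action (r ⊙ s)(w) = r(w)·s. -/
/-!
Apart from the star, every law is a pointwise identity or a rearrangement of the finite sum
over the factorizations of a guarded string, and holds for all guarded series. The star of `p`
is an eventually constant sum of the powers of `p`. Since a string has only finitely many
factorizations, multiplying by a fixed series preserves eventual constancy: shifting the index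
gives the unfolding laws, and the induction laws hold because every partial sum of `p^k q` lies
below `r` in the idempotent order. Tests are supported on atoms, where the fusion product is the
pointwise product, so they form a Boolean algebra below `1`.
-/

/-- A guarded string `G₁a₁G₂…a_{k-1}G_k`: a list of atoms interleaved with a list of
letters, with one more atom than letters. -/
structure GuardedString (A B : Type*) where
  atoms : List A
  letters : List B
  len : atoms.length = letters.length + 1

namespace GuardedString

variable {A B : Type*}

theorem atoms_ne_nil (σ : GuardedString A B) : σ.atoms ≠ [] := by
  intro h
  have hlen := σ.len
  rw [h] at hlen
  simp at hlen

/-- The head (first atom) of a guarded string. -/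
def hd (σ : GuardedString A B) : A := σ.atoms.head σ.atoms_ne_nil

/-- The tail (last atom) of a guarded string. -/
def tl (σ : GuardedString A B) : A := σ.atoms.getLast σ.atoms_ne_nil

/-- The fusion product: defined when `tl σ = hd τ`, joining the two strings and
identifying the shared atom; undefined (`none`) otherwise. -/
def fuse [DecidableEq A] (σ τ : GuardedString A B) : Option (GuardedString A B) :=
  if σ.tl = τ.hd then
    some ⟨σ.atoms ++ τ.atoms.tail, σ.letters ++ τ.letters, by
      simp [List.length_append, List.length_tail, σ.len, τ.len]; omega⟩
  else none

/-- The guarded string consisting of a single atom. -/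
def ofAtom (G : A) : GuardedString A B := ⟨[G], [], by simp⟩

end GuardedString

namespace GuardedString

/-- The prefix of a guarded string consisting of the first `i` letters (and `i+1` atoms). -/
def takeGS {A B : Type*} (w : GuardedString A B) (i : ℕ) : GuardedString A B :=
  ⟨w.atoms.take (i + 1), w.letters.take i, by simp [w.len] <;> omega⟩

/-- The suffix of a guarded string obtained by dropping the first `i` letters. -/
def dropGS {A B : Type*} (w : GuardedString A B) (i : ℕ) : GuardedString A B :=
  ⟨w.atoms.drop (min i w.letters.length), w.letters.drop i, by simp [w.len]; omega⟩

end GuardedString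

/-- The Cauchy product of guarded formal power series:
`(r₁·r₂)(w) = Σ {r₁(u)·r₂(v) : w = u ⋄ v}`, realized by summing over all
factorizations of `w` (one for each split position of its letters). -/
def gmul {A B S : Type*} [Semiring S] (r₁ r₂ : GuardedString A B → S) :
    GuardedString A B → S := fun w =>
  ∑ i ∈ Finset.range (w.letters.length + 1), r₁ (w.takeGS i) * r₂ (w.dropGS i)

/-- Pointwise addition of guarded formal power series. -/
def gadd {A B S : Type*} [Semiring S] (r₁ r₂ : GuardedString A B → S) :
    GuardedString A B → S := fun w => r₁ w + r₂ w

/-- The zero guarded series. -/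
def gzero {A B S : Type*} [Semiring S] : GuardedString A B → S := fun _ => 0

/-- The unit guarded series: value `1` on atoms, `0` elsewhere. -/
def gone {A B S : Type*} [Semiring S] : GuardedString A B → S :=
  fun w => if w.letters.isEmpty then 1 else 0

/-- Powers of a guarded series under the Cauchy product. -/
def gpow {A B S : Type*} [Semiring S] (r : GuardedString A B → S) :
    ℕ → GuardedString A B → S
  | 0 => gone
  | n + 1 => gmul (gpow r n) r

/-- The scalar action `(r ⊙ s)(w) = r(w) · s`. -/
def gsmul {A B S : Type*} [Semiring S] (r : GuardedString A B → S) (s : S) :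
    GuardedString A B → S := fun w => r w * s

/-- The test series `1_K` for a set of atoms `K`: value `1` on atoms in `K`,
`0` elsewhere. -/
def gtest {A B S : Type*} [DecidableEq A] [Semiring S] (K : Finset A) :
    GuardedString A B → S :=
  fun w => if w.letters.isEmpty ∧ w.hd ∈ K then 1 else 0

/-- The rational guarded formal power series: the least class containing the
polynomials (finitely supported series) and closed under the rational operations
(here `st` is the star operation). -/
inductive Rational {A B S : Type*} [Semiring S]
    (st : (GuardedString A B → S) → GuardedString A B → S) :
    (GuardedString A B → S) → Prop
  | poly (r : GuardedString A B → S) : {w | r w ≠ 0}.Finite → Rational st r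
  | add {r₁ r₂} : Rational st r₁ → Rational st r₂ → Rational st (gadd r₁ r₂)
  | mul {r₁ r₂} : Rational st r₁ → Rational st r₂ → Rational st (gmul r₁ r₂)
  | star {r} : Rational st r → Rational st (st r)
  | smul {r} (s : S) : Rational st r → Rational st (gsmul r s)

open Finset

namespace GuardedString

variable {A B : Type*}

theorem ext {σ τ : GuardedString A B} (h₁ : σ.atoms = τ.atoms) (h₂ : σ.letters = τ.letters) :
    σ = τ := by
  cases σ; cases τ; simp_all

@[simp] theorem takeGS_atoms (w : GuardedString A B) (i : ℕ) :
    (w.takeGS i).atoms = w.atoms.take (i + 1) := rfl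

@[simp] theorem takeGS_letters (w : GuardedString A B) (i : ℕ) :
    (w.takeGS i).letters = w.letters.take i := rfl

@[simp] theorem dropGS_atoms (w : GuardedString A B) (i : ℕ) :
    (w.dropGS i).atoms = w.atoms.drop (min i w.letters.length) := rfl

@[simp] theorem dropGS_letters (w : GuardedString A B) (i : ℕ) :
    (w.dropGS i).letters = w.letters.drop i := rfl

theorem dropGS_zero (w : GuardedString A B) : w.dropGS 0 = w :=
  ext (by simp) rfl

theorem takeGS_length (w : GuardedString A B) : w.takeGS w.letters.length = w :=
  ext (by rw [takeGS_atoms, ← w.len, List.take_length]) (by simp)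

theorem takeGS_zero_of_letters_eq_nil {w : GuardedString A B} (hw : w.letters = []) :
    w.takeGS 0 = w := by
  simpa [hw] using w.takeGS_length

theorem takeGS_takeGS (w : GuardedString A B) {i j : ℕ} (hij : i ≤ j) :
    (w.takeGS j).takeGS i = w.takeGS i :=
  ext (by simp [List.take_take, hij]) (by simp [List.take_take, hij])

theorem dropGS_takeGS (w : GuardedString A B) {i j : ℕ} (hij : i ≤ j)
    (hj : j ≤ w.letters.length) :
    (w.takeGS j).dropGS i = (w.dropGS i).takeGS (j - i) := by
  refine ext ?_ (by simp [List.drop_take])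
  simp only [dropGS_atoms, takeGS_atoms, takeGS_letters, List.length_take,
    List.drop_take]
  congr 2 <;> omega

theorem dropGS_dropGS (w : GuardedString A B) {i j : ℕ} (hij : i ≤ j)
    (hj : j ≤ w.letters.length) :
    (w.dropGS i).dropGS (j - i) = w.dropGS j := by
  refine ext ?_ (by simp only [dropGS_letters, List.drop_drop]; congr 1; omega)
  simp only [dropGS_atoms, dropGS_letters, List.length_drop, List.drop_drop]
  congr 1; omega

theorem finite_setOf_letters_eq_nil [Finite A] :
    {w : GuardedString A B | w.letters = []}.Finite := by
  refine (Set.finite_range (ofAtom (B := B))).subset fun w hw => ?_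
  have hw : w.letters = [] := hw
  obtain ⟨a, ha⟩ := List.length_eq_one_iff.mp (by simpa [hw] using w.len)
  exact ⟨a, ext ha.symm hw.symm⟩

end GuardedString

open GuardedString

section Semiring

variable {A B S : Type*} [Semiring S]

theorem gadd_comm (p q : GuardedString A B → S) : gadd p q = gadd q p :=
  funext fun _ => add_comm _ _

theorem gadd_assoc (p q r : GuardedString A B → S) :
    gadd (gadd p q) r = gadd p (gadd q r) :=
  funext fun _ => add_assoc _ _ _

theorem gzero_gadd (p : GuardedString A B → S) : gadd gzero p = p :=
  funext fun _ => zero_add _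

theorem gadd_self (hid : ∀ x : S, x + x = x) (p : GuardedString A B → S) : gadd p p = p :=
  funext fun w => hid (p w)

theorem gmul_gadd (p q r : GuardedString A B → S) :
    gmul p (gadd q r) = gadd (gmul p q) (gmul p r) := by
  funext w
  simp only [gmul, gadd, mul_add, sum_add_distrib]

theorem gadd_gmul (p q r : GuardedString A B → S) :
    gmul (gadd p q) r = gadd (gmul p r) (gmul q r) := by
  funext w
  simp only [gmul, gadd, add_mul, sum_add_distrib]

theorem gzero_gmul (p : GuardedString A B → S) : gmul gzero p = gzero := by
  funext w
  simp [gmul, gzero]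

theorem gmul_gzero (p : GuardedString A B → S) : gmul p gzero = gzero := by
  funext w
  simp [gmul, gzero]

theorem gone_gmul (p : GuardedString A B → S) : gmul gone p = p := by
  funext w
  rw [gmul, sum_eq_single 0 (fun i hi hi0 => ?_) (by simp)]
  · simp [gone, dropGS_zero]
  · have hw : w.letters ≠ [] := fun h => hi0 (by simpa [h] using hi)
    simp [gone, List.take_eq_nil_iff, hi0, hw]

theorem gmul_gone (p : GuardedString A B → S) : gmul p gone = p := by
  funext w
  rw [gmul, sum_eq_single w.letters.length (fun i hi hin => ?_) (by simp)]
  · simp [gone, takeGS_length]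
  · have hi : ¬ w.letters.length ≤ i := by
      rw [mem_range] at hi
      omega
    simp [gone, List.drop_eq_nil_iff, hi]

theorem gmul_takeGS_apply (p q : GuardedString A B → S) (w : GuardedString A B) {j : ℕ}
    (hj : j ≤ w.letters.length) :
    gmul p q (w.takeGS j) =
      ∑ i ∈ range (j + 1), p (w.takeGS i) * q ((w.dropGS i).takeGS (j - i)) := by
  rw [gmul, takeGS_letters, List.length_take, min_eq_left hj]
  refine sum_congr rfl fun i hi => ?_
  have hij : i ≤ j := Nat.lt_succ_iff.mp (mem_range.mp hi)
  rw [takeGS_takeGS w hij, dropGS_takeGS w hij hj]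

theorem gmul_assoc (p q r : GuardedString A B → S) :
    gmul (gmul p q) r = gmul p (gmul q r) := by
  funext w
  set n := w.letters.length
  let F (i d : ℕ) : S := p (w.takeGS i) * q ((w.dropGS i).takeGS d) * r ((w.dropGS i).dropGS d)
  calc gmul (gmul p q) r w
      = ∑ j ∈ range (n + 1), ∑ i ∈ range (j + 1), F i (j - i) := by
        refine sum_congr rfl fun j hj => ?_
        have hjn : j ≤ n := Nat.lt_succ_iff.mp (mem_range.mp hj)
        rw [gmul_takeGS_apply p q w hjn, sum_mul]
        refine sum_congr rfl fun i hi => ?_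
        rw [← dropGS_dropGS w (Nat.lt_succ_iff.mp (mem_range.mp hi)) hjn]
    _ = ∑ i ∈ range (n + 1), ∑ d ∈ range (n + 1 - i), F i d := sum_range_diag_flip _ F
    _ = gmul p (gmul q r) w := by
        refine sum_congr rfl fun i hi => ?_
        rw [gmul, dropGS_letters, List.length_drop, mul_sum,
          Nat.sub_add_comm (Nat.lt_succ_iff.mp (mem_range.mp hi))]
        exact sum_congr rfl fun d _ => mul_assoc _ _ _

theorem gpow_succ (r : GuardedString A B → S) (n : ℕ) : gpow r (n + 1) = gmul (gpow r n) r :=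
  rfl

theorem gpow_succ' (r : GuardedString A B → S) (n : ℕ) :
    gpow r (n + 1) = gmul r (gpow r n) := by
  induction n with
  | zero => exact (gone_gmul r).trans (gmul_gone r).symm
  | succ n ih => rw [gpow_succ, ih, gmul_assoc, ← gpow_succ, ← ih]

end Semiring

section Star

variable {A B S : Type*} [Semiring S]

def HasEventualSum (f : ℕ → GuardedString A B → S) (F : GuardedString A B → S) : Prop :=
  ∀ w, ∃ N, ∀ m ≥ N, ∑ i ∈ range (m + 1), f i w = F w

namespace HasEventualSum

variable {f : ℕ → GuardedString A B → S} {F G : GuardedString A B → S}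

theorem unique (hF : HasEventualSum f F) (hG : HasEventualSum f G) : F = G := by
  funext w
  obtain ⟨N₁, h₁⟩ := hF w
  obtain ⟨N₂, h₂⟩ := hG w
  rw [← h₁ (max N₁ N₂) (le_max_left _ _), h₂ _ (le_max_right _ _)]

theorem gadd_shift (hF : HasEventualSum f F) (hG : HasEventualSum (fun k => f (k + 1)) G) :
    gadd (f 0) G = F := by
  funext w
  obtain ⟨N₁, h₁⟩ := hF w
  obtain ⟨N₂, h₂⟩ := hG w
  rw [gadd, ← h₁ (max N₁ N₂ + 1) (by omega), ← h₂ (max N₁ N₂) (le_max_right _ _),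
    sum_range_succ' _ (max N₁ N₂ + 1), add_comm]

-- A string has finitely many factorizations, so one bound works for all factors at once.
theorem gmul_left (hF : HasEventualSum f F) (q : GuardedString A B → S) :
    HasEventualSum (fun k => gmul q (f k)) (gmul q F) := by
  choose N hN using hF
  intro w
  refine ⟨(range (w.letters.length + 1)).sup fun i => N (w.dropGS i), fun m hm => ?_⟩
  simp only [gmul]
  rw [sum_comm]
  refine sum_congr rfl fun i hi => ?_
  rw [← mul_sum, hN _ m ((le_sup (f := fun i => N (w.dropGS i)) hi).trans hm)]

theorem gmul_right (hF : HasEventualSum f F) (q : GuardedString A B → S) :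
    HasEventualSum (fun k => gmul (f k) q) (gmul F q) := by
  choose N hN using hF
  intro w
  refine ⟨(range (w.letters.length + 1)).sup fun i => N (w.takeGS i), fun m hm => ?_⟩
  simp only [gmul]
  rw [sum_comm]
  refine sum_congr rfl fun i hi => ?_
  rw [← sum_mul, hN _ m ((le_sup (f := fun i => N (w.takeGS i)) hi).trans hm)]

theorem gadd_eq_of_forall (hF : HasEventualSum f F) {r : GuardedString A B → S}
    (hf : ∀ k, gadd (f k) r = r) : gadd F r = r := by
  funext w
  obtain ⟨N, hN⟩ := hF w
  rw [gadd, ← hN N le_rfl]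
  exact sum_induction _ (· + r w = r w) (fun a b ha hb => by rw [add_assoc, hb, ha])
    (zero_add _) fun k _ => congrFun (hf k) w

end HasEventualSum

theorem gadd_eq_of_gadd_gadd_eq (hid : ∀ x : S, x + x = x) {p q r : GuardedString A B → S}
    (h : gadd (gadd p q) r = r) : gadd p r = r ∧ gadd q r = r := by
  constructor <;> funext w <;> have hw := congrFun h w <;> simp only [gadd] at hw ⊢
  · conv_lhs => rw [← hw]
    rw [show p w + (p w + q w + r w) = p w + p w + q w + r w by ac_rfl, hid, hw]
  · conv_lhs => rw [← hw]
    rw [show q w + (p w + q w + r w) = p w + (q w + q w) + r w by ac_rfl, hid, hw]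

variable {p F : GuardedString A B → S}

theorem HasEventualSum.gadd_gone_gmul (h : HasEventualSum (gpow p) F) :
    gadd gone (gmul p F) = F :=
  h.gadd_shift (by simpa only [gpow_succ'] using h.gmul_left p)

theorem HasEventualSum.gadd_gone_gmul' (h : HasEventualSum (gpow p) F) :
    gadd gone (gmul F p) = F :=
  h.gadd_shift (h.gmul_right p)

theorem gadd_gmul_gpow_eq (hid : ∀ x : S, x + x = x) {q r : GuardedString A B → S}
    (h : gadd (gadd q (gmul p r)) r = r) (k : ℕ) : gadd (gmul (gpow p k) q) r = r := by
  obtain ⟨hq, hpr⟩ := gadd_eq_of_gadd_gadd_eq hid h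
  induction k with
  | zero => rwa [gpow, gone_gmul]
  | succ k ih =>
    calc gadd (gmul (gpow p (k + 1)) q) r
        = gadd (gmul p (gmul (gpow p k) q)) (gadd (gmul p r) r) := by
          rw [hpr, gpow_succ', gmul_assoc]
      _ = gadd (gmul p (gadd (gmul (gpow p k) q) r)) r := by rw [← gadd_assoc, gmul_gadd]
      _ = r := by rw [ih, hpr]

theorem gadd_gmul_gpow_eq' (hid : ∀ x : S, x + x = x) {q r : GuardedString A B → S}
    (h : gadd (gadd q (gmul r p)) r = r) (k : ℕ) : gadd (gmul q (gpow p k)) r = r := by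
  obtain ⟨hq, hrp⟩ := gadd_eq_of_gadd_gadd_eq hid h
  induction k with
  | zero => rwa [gpow, gmul_gone]
  | succ k ih =>
    calc gadd (gmul q (gpow p (k + 1))) r
        = gadd (gmul (gmul q (gpow p k)) p) (gadd (gmul r p) r) := by
          rw [hrp, gpow_succ, gmul_assoc]
      _ = gadd (gmul (gadd (gmul q (gpow p k)) r) p) r := by rw [← gadd_assoc, gadd_gmul]
      _ = r := by rw [ih, hrp]

theorem HasEventualSum.gadd_gmul_eq (hid : ∀ x : S, x + x = x) (hF : HasEventualSum (gpow p) F)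
    {q r : GuardedString A B → S} (h : gadd (gadd q (gmul p r)) r = r) :
    gadd (gmul F q) r = r :=
  (hF.gmul_right q).gadd_eq_of_forall (gadd_gmul_gpow_eq hid h)

theorem HasEventualSum.gadd_gmul_eq' (hid : ∀ x : S, x + x = x) (hF : HasEventualSum (gpow p) F)
    {q r : GuardedString A B → S} (h : gadd (gadd q (gmul r p)) r = r) :
    gadd (gmul q F) r = r :=
  (hF.gmul_left q).gadd_eq_of_forall (gadd_gmul_gpow_eq' hid h)

end Star

section Scalar

variable {A B S : Type*}

section Semiring

variable [Semiring S]

theorem gsmul_gadd (p q : GuardedString A B → S) (s : S) :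
    gsmul (gadd p q) s = gadd (gsmul p s) (gsmul q s) :=
  funext fun _ => add_mul _ _ _

theorem gsmul_add (p : GuardedString A B → S) (s t : S) :
    gsmul p (s + t) = gadd (gsmul p s) (gsmul p t) :=
  funext fun _ => mul_add _ _ _

theorem gsmul_mul (p : GuardedString A B → S) (s t : S) :
    gsmul p (s * t) = gsmul (gsmul p s) t :=
  funext fun _ => (mul_assoc _ _ _).symm

theorem gsmul_one (p : GuardedString A B → S) : gsmul p 1 = p :=
  funext fun _ => mul_one _

theorem gsmul_zero (p : GuardedString A B → S) : gsmul p 0 = gzero :=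
  funext fun _ => mul_zero _

theorem gzero_gsmul (s : S) : gsmul (gzero (A := A) (B := B)) s = gzero :=
  funext fun _ => zero_mul _

theorem gsmul_gmul (p q : GuardedString A B → S) (s : S) :
    gsmul (gmul p q) s = gmul p (gsmul q s) := by
  funext w
  simp only [gsmul, gmul, sum_mul, mul_assoc]

theorem gpow_gsmul_gone (s : S) (n : ℕ) :
    gpow (gsmul (gone (A := A) (B := B)) s) n = gsmul gone (s ^ n) := by
  induction n with
  | zero => rw [pow_zero, gsmul_one]; rfl
  | succ n ih => rw [gpow_succ, ih, ← gsmul_gmul, gmul_gone, ← gsmul_mul, pow_succ]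

theorem hasEventualSum_gpow_gsmul_gone {s t : S}
    (h : ∃ N : ℕ, ∀ m ≥ N, ∑ i ∈ range (m + 1), s ^ i = t) :
    HasEventualSum (gpow (gsmul (gone (A := A) (B := B)) s)) (gsmul gone t) := by
  obtain ⟨N, hN⟩ := h
  refine fun w => ⟨N, fun m hm => ?_⟩
  simp only [gpow_gsmul_gone, gsmul]
  rw [← mul_sum, hN m hm]

end Semiring

theorem gsmul_gmul' [CommSemiring S] (p q : GuardedString A B → S) (s : S) :
    gsmul (gmul p q) s = gmul (gsmul p s) q := by
  funext w
  simp only [gsmul, gmul, sum_mul, mul_right_comm]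

end Scalar

section Tests

variable {A B S : Type*} [Semiring S]

def IsAtomicSeries (r : GuardedString A B → S) : Prop :=
  ∀ w, w.letters ≠ [] → r w = 0

theorem IsAtomicSeries.finite_support [Finite A] {r : GuardedString A B → S}
    (hr : IsAtomicSeries r) : {w | r w ≠ 0}.Finite :=
  finite_setOf_letters_eq_nil.subset fun w hw => by_contra fun h => hw (hr w h)

theorem isAtomicSeries_gzero : IsAtomicSeries (gzero : GuardedString A B → S) :=
  fun _ _ => rfl

theorem isAtomicSeries_gtest [DecidableEq A] (K : Finset A) :
    IsAtomicSeries (gtest (B := B) (S := S) K) :=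
  fun w hw => by simp [gtest, hw]

theorem gmul_apply_of_isAtomicSeries {p q : GuardedString A B → S} (hp : IsAtomicSeries p)
    (hq : IsAtomicSeries q) (w : GuardedString A B) : gmul p q w = p w * q w := by
  by_cases hw : w.letters = []
  · simp [gmul, hw, takeGS_zero_of_letters_eq_nil hw, dropGS_zero]
  · rw [hp w hw, zero_mul, gmul]
    refine sum_eq_zero fun i _ => ?_
    rcases Nat.eq_zero_or_pos i with rfl | hi
    · rw [dropGS_zero, hq w hw, mul_zero]
    · rw [hp _ (by simp [List.take_eq_nil_iff, hi.ne', hw]), zero_mul]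

variable [DecidableEq A]

theorem gtest_univ [Fintype A] : gtest (B := B) (S := S) (univ : Finset A) = gone := by
  funext w
  simp [gtest, gone]

theorem gtest_empty : gtest (B := B) (S := S) (∅ : Finset A) = gzero := by
  funext w
  simp [gtest, gzero]

theorem gmul_gtest (K K' : Finset A) :
    gmul (gtest (B := B) (S := S) K) (gtest K') = gtest (K ∩ K') := by
  funext w
  rw [gmul_apply_of_isAtomicSeries (isAtomicSeries_gtest K) (isAtomicSeries_gtest K')]
  simp only [gtest, mem_inter]
  split_ifs <;> simp_all

theorem gadd_gtest (hid : ∀ x : S, x + x = x) (K K' : Finset A) :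
    gadd (gtest (B := B) (S := S) K) (gtest K') = gtest (K ∪ K') := by
  funext w
  simp only [gadd, gtest, mem_union]
  split_ifs <;> simp_all

end Tests

theorem stmt16_general {A B S : Type*} [Fintype A] [DecidableEq A]
    [CommSemiring S]
    (hid : ∀ x : S, x + x = x)
    (st : (GuardedString A B → S) → GuardedString A B → S)
    (hst : ∀ (r : GuardedString A B → S) (w : GuardedString A B),
      ∃ N : ℕ, ∀ m ≥ N, (∑ i ∈ Finset.range (m + 1), gpow r i w) = st r w)
    (sstar : S → S)
    (hsstar : ∀ s : S, ∃ N : ℕ, ∀ m ≥ N,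
      (∑ i ∈ Finset.range (m + 1), s ^ i) = sstar s) :
    let R : (GuardedString A B → S) → Prop := Rational st
    let le : (GuardedString A B → S) → (GuardedString A B → S) → Prop :=
      fun r₁ r₂ => gadd r₁ r₂ = r₂
    -- tests, units and the unit series are rational
    (R gzero ∧ R gone ∧ ∀ K : Finset A, R (gtest (B := B) (S := S) K)) ∧
    -- idempotent semiring axioms
    (∀ p q, R p → R q → gadd p q = gadd q p) ∧
    (∀ p q r, R p → R q → R r → gadd (gadd p q) r = gadd p (gadd q r)) ∧
    (∀ p, R p → gadd gzero p = p) ∧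
    (∀ p, R p → gadd p p = p) ∧
    (∀ p q r, R p → R q → R r → gmul (gmul p q) r = gmul p (gmul q r)) ∧
    (∀ p, R p → gmul gone p = p) ∧
    (∀ p, R p → gmul p gone = p) ∧
    (∀ p q r, R p → R q → R r → gmul p (gadd q r) = gadd (gmul p q) (gmul p r)) ∧
    (∀ p q r, R p → R q → R r → gmul (gadd p q) r = gadd (gmul p r) (gmul q r)) ∧
    (∀ p, R p → gmul gzero p = gzero) ∧
    (∀ p, R p → gmul p gzero = gzero) ∧
    -- Kleene algebra axioms for the star
    (∀ p, R p → gadd gone (gmul p (st p)) = st p) ∧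
    (∀ p, R p → gadd gone (gmul (st p) p) = st p) ∧
    (∀ p q r, R p → R q → R r → le (gadd q (gmul p r)) r → le (gmul (st p) q) r) ∧
    (∀ p q r, R p → R q → R r → le (gadd q (gmul r p)) r → le (gmul q (st p)) r) ∧
    -- right S-semimodule axioms and compatibility of the scalar action
    (∀ p q (s : S), R p → R q →
      gsmul (gadd p q) s = gadd (gsmul p s) (gsmul q s)) ∧
    (∀ p (s t : S), R p → gsmul p (s + t) = gadd (gsmul p s) (gsmul p t)) ∧
    (∀ p (s t : S), R p → gsmul p (s * t) = gsmul (gsmul p s) t) ∧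
    (∀ p, R p → gsmul p (1 : S) = p) ∧
    (∀ p, R p → gsmul p (0 : S) = gzero) ∧
    (∀ s : S, gsmul (gzero (A := A) (B := B)) s = gzero) ∧
    (∀ p q (s : S), R p → R q → gsmul (gmul p q) s = gmul p (gsmul q s)) ∧
    (∀ p q (s : S), R p → R q → gsmul (gmul p q) s = gmul (gsmul p s) q) ∧
    (∀ s : S, le (gsmul (gone (A := A) (B := B)) (sstar s)) (st (gsmul gone s))) ∧
    -- the tests form a Boolean algebra with complement 1_{At \ K}
    (∀ K K' : Finset A, gmul (gtest (B := B) (S := S) K) (gtest K') = gtest (K ∩ K')) ∧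
    (∀ K K' : Finset A, gadd (gtest (B := B) (S := S) K) (gtest K') = gtest (K ∪ K')) ∧
    (∀ K : Finset A, gmul (gtest (B := B) (S := S) K) (gtest Kᶜ) = gzero) ∧
    (∀ K : Finset A, gadd (gtest (B := B) (S := S) K) (gtest Kᶜ) = gone) ∧
    (gtest (B := B) (S := S) (Finset.univ : Finset A) = gone) ∧
    (gtest (B := B) (S := S) (∅ : Finset A) = gzero) := by
  intro R le
  have hstar (p) : HasEventualSum (gpow p) (st p) := hst p
  have hsmul_star (s : S) : st (gsmul gone s) = gsmul (gone (A := A) (B := B)) (sstar s) :=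
    (hstar _).unique (hasEventualSum_gpow_gsmul_gone (hsstar s))
  have hrat {r : GuardedString A B → S} (hr : IsAtomicSeries r) : R r :=
    Rational.poly r hr.finite_support
  refine ⟨⟨hrat isAtomicSeries_gzero, gtest_univ (A := A) (B := B) (S := S) ▸ hrat (isAtomicSeries_gtest _),
      fun K => hrat (isAtomicSeries_gtest K)⟩,
    fun p q _ _ => gadd_comm p q, fun p q r _ _ _ => gadd_assoc p q r,
    fun p _ => gzero_gadd p, fun p _ => gadd_self hid p,
    fun p q r _ _ _ => gmul_assoc p q r, fun p _ => gone_gmul p, fun p _ => gmul_gone p,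
    fun p q r _ _ _ => gmul_gadd p q r, fun p q r _ _ _ => gadd_gmul p q r,
    fun p _ => gzero_gmul p, fun p _ => gmul_gzero p,
    fun p _ => (hstar p).gadd_gone_gmul, fun p _ => (hstar p).gadd_gone_gmul',
    fun p _ _ _ _ _ h => (hstar p).gadd_gmul_eq hid h,
    fun p _ _ _ _ _ h => (hstar p).gadd_gmul_eq' hid h,
    fun p q s _ _ => gsmul_gadd p q s, fun p s t _ => gsmul_add p s t,
    fun p s t _ => gsmul_mul p s t, fun p _ => gsmul_one p, fun p _ => gsmul_zero p,
    gzero_gsmul, fun p q s _ _ => gsmul_gmul p q s, fun p q s _ _ => gsmul_gmul' p q s,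
    fun s => by rw [hsmul_star]; exact gadd_self hid _,
    gmul_gtest, gadd_gtest hid,
    fun K => by rw [gmul_gtest, inter_compl, gtest_empty],
    fun K => by rw [gadd_gtest hid, union_compl, gtest_univ],
    gtest_univ, gtest_empty⟩

/-- Over a finite copo-semiring `S`, the rational guarded formal power series form
a Kleene `S`-algebra with tests: they satisfy the idempotent-semiring and Kleene
algebra axioms, the right `S`-semimodule and compatibility laws for the scalar
action, the axiom `1 ⊙ s* ≤ (1 ⊙ s)*`, and the tests `1_K` (for `K ⊆ At(Φ)`)
form a Boolean algebra of elements below `1`. Here `st` is any star operation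
satisfying `(st r)(w) = Σ_n r^n(w)` (the eventually-constant partial sums), and
`sstar` is the star of the finite semiring `S`. -/
theorem stmt16 {A B S : Type*} [Fintype A] [DecidableEq A]
    [CommSemiring S] [Fintype S] [PartialOrder S]
    (hid : ∀ x : S, x + x = x)
    (hadd_mono : ∀ a b c d : S, a ≤ b → c ≤ d → a + c ≤ b + d)
    (hmul_mono : ∀ a b c d : S, a ≤ b → c ≤ d → a * c ≤ b * d)
    (hzero_le : ∀ s : S, (0 : S) ≤ s)
    (st : (GuardedString A B → S) → GuardedString A B → S)
    (hst : ∀ (r : GuardedString A B → S) (w : GuardedString A B),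
      ∃ N : ℕ, ∀ m ≥ N, (∑ i ∈ Finset.range (m + 1), gpow r i w) = st r w)
    (sstar : S → S)
    (hsstar : ∀ s : S, ∃ N : ℕ, ∀ m ≥ N,
      (∑ i ∈ Finset.range (m + 1), s ^ i) = sstar s) :
    let R : (GuardedString A B → S) → Prop := Rational st
    let le : (GuardedString A B → S) → (GuardedString A B → S) → Prop :=
      fun r₁ r₂ => gadd r₁ r₂ = r₂
    -- tests, units and the unit series are rational
    (R gzero ∧ R gone ∧ ∀ K : Finset A, R (gtest (B := B) (S := S) K)) ∧
    -- idempotent semiring axioms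
    (∀ p q, R p → R q → gadd p q = gadd q p) ∧
    (∀ p q r, R p → R q → R r → gadd (gadd p q) r = gadd p (gadd q r)) ∧
    (∀ p, R p → gadd gzero p = p) ∧
    (∀ p, R p → gadd p p = p) ∧
    (∀ p q r, R p → R q → R r → gmul (gmul p q) r = gmul p (gmul q r)) ∧
    (∀ p, R p → gmul gone p = p) ∧
    (∀ p, R p → gmul p gone = p) ∧
    (∀ p q r, R p → R q → R r → gmul p (gadd q r) = gadd (gmul p q) (gmul p r)) ∧
    (∀ p q r, R p → R q → R r → gmul (gadd p q) r = gadd (gmul p r) (gmul q r)) ∧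
    (∀ p, R p → gmul gzero p = gzero) ∧
    (∀ p, R p → gmul p gzero = gzero) ∧
    -- Kleene algebra axioms for the star
    (∀ p, R p → gadd gone (gmul p (st p)) = st p) ∧
    (∀ p, R p → gadd gone (gmul (st p) p) = st p) ∧
    (∀ p q r, R p → R q → R r → le (gadd q (gmul p r)) r → le (gmul (st p) q) r) ∧
    (∀ p q r, R p → R q → R r → le (gadd q (gmul r p)) r → le (gmul q (st p)) r) ∧
    -- right S-semimodule axioms and compatibility of the scalar action
    (∀ p q (s : S), R p → R q →
      gsmul (gadd p q) s = gadd (gsmul p s) (gsmul q s)) ∧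
    (∀ p (s t : S), R p → gsmul p (s + t) = gadd (gsmul p s) (gsmul p t)) ∧
    (∀ p (s t : S), R p → gsmul p (s * t) = gsmul (gsmul p s) t) ∧
    (∀ p, R p → gsmul p (1 : S) = p) ∧
    (∀ p, R p → gsmul p (0 : S) = gzero) ∧
    (∀ s : S, gsmul (gzero (A := A) (B := B)) s = gzero) ∧
    (∀ p q (s : S), R p → R q → gsmul (gmul p q) s = gmul p (gsmul q s)) ∧
    (∀ p q (s : S), R p → R q → gsmul (gmul p q) s = gmul (gsmul p s) q) ∧
    (∀ s : S, le (gsmul (gone (A := A) (B := B)) (sstar s)) (st (gsmul gone s))) ∧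
    -- the tests form a Boolean algebra with complement 1_{At \ K}
    (∀ K K' : Finset A, gmul (gtest (B := B) (S := S) K) (gtest K') = gtest (K ∩ K')) ∧
    (∀ K K' : Finset A, gadd (gtest (B := B) (S := S) K) (gtest K') = gtest (K ∪ K')) ∧
    (∀ K : Finset A, gmul (gtest (B := B) (S := S) K) (gtest Kᶜ) = gzero) ∧
    (∀ K : Finset A, gadd (gtest (B := B) (S := S) K) (gtest Kᶜ) = gone) ∧
    (gtest (B := B) (S := S) (Finset.univ : Finset A) = gone) ∧
    (gtest (B := B) (S := S) (∅ : Finset A) = gzero) :=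
  stmt16_general hid st hst sstar hsstar
end
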